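/- arXiv:2007.13315 — 2 statements merged into one kernel-verified Lean document; each statement's English description precedes it below -/
import Mathlib

section
/- Let m ≥ 1 and k ≥ 0 be integers, δ > 0, and let c : (−δ, δ) × [0, 2π] → ℝ^m be a smooth map with ∂_θ c(ε, θ) ≠ 0 for all (ε, θ); write h := ∂_ε c, v := ∂_θ c / ‖∂_θ c‖, and D_s := ‖∂_θ c‖^{-1} ∂_θ. Then, with the convention binom(k, k+1) := 0, one has the identity ∂_ε ( D_s^k ‖∂_θ c‖ ) = Σ_{i=0}^{k} ( binom(k,i) − binom(k,i+1) ) · D_s^i ⟨v, D_s h⟩ · D_s^{k−i} ‖∂_θ c‖ at every point of (−δ, δ) × [0, 2π]. -/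
open Real Set
open scoped RealInnerProductSpace

/-- The variation field `h = ∂_ε c` of a family of curves `c(ε, θ)`. -/
noncomputable def dEps (m : ℕ) (c : ℝ → ℝ → EuclideanSpace ℝ (Fin m)) (ε θ : ℝ) :
    EuclideanSpace ℝ (Fin m) :=
  deriv (fun ε' => c ε' θ) ε

/-- The unit tangent vector `v = ∂_θ c / ‖∂_θ c‖` of a family of curves `c(ε, θ)`. -/
noncomputable def unitTangent (m : ℕ) (c : ℝ → ℝ → EuclideanSpace ℝ (Fin m)) (ε θ : ℝ) :
    EuclideanSpace ℝ (Fin m) :=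
  ‖deriv (c ε) θ‖⁻¹ • deriv (c ε) θ

/-- The arc-length derivative `D_s k = ‖∂_θ c‖⁻¹ ∂_θ k` of a family of fields `k(ε, θ)`
along a family of curves `c(ε, θ)`. -/
noncomputable def Ds (m : ℕ) (c k : ℝ → ℝ → EuclideanSpace ℝ (Fin m)) (ε θ : ℝ) :
    EuclideanSpace ℝ (Fin m) :=
  ‖deriv (c ε) θ‖⁻¹ • deriv (k ε) θ

/-- The arc-length derivative `D_s φ = ‖∂_θ c‖⁻¹ ∂_θ φ` of a scalar function `φ` of `θ`,
along the curve `c(ε, ·)`. -/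
noncomputable def DsScalar (m : ℕ) (c : ℝ → ℝ → EuclideanSpace ℝ (Fin m)) (ε : ℝ)
    (φ : ℝ → ℝ) : ℝ → ℝ :=
  fun θ => ‖deriv (c ε) θ‖⁻¹ * deriv φ θ

open scoped ContDiff

variable {F' : Type*} [NormedAddCommGroup F'] [NormedSpace ℝ F']

lemma deriv_fst {f : ℝ × ℝ → F'} {ε θ : ℝ} (hf : DifferentiableAt ℝ f (ε, θ)) :
    deriv (fun t => f (t, θ)) ε = fderiv ℝ f (ε, θ) (1, 0) := by
  have h1 : HasDerivAt (fun t : ℝ => (t, θ)) ((1 : ℝ), (0 : ℝ)) ε :=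
    HasDerivAt.prodMk (hasDerivAt_id ε) (hasDerivAt_const ε θ)
  exact (hf.hasFDerivAt.comp_hasDerivAt ε h1).deriv

lemma deriv_snd {f : ℝ × ℝ → F'} {ε θ : ℝ} (hf : DifferentiableAt ℝ f (ε, θ)) :
    deriv (fun t => f (ε, t)) θ = fderiv ℝ f (ε, θ) (0, 1) := by
  have h1 : HasDerivAt (fun t : ℝ => (ε, t)) ((0 : ℝ), (1 : ℝ)) θ :=
    HasDerivAt.prodMk (hasDerivAt_const θ ε) (hasDerivAt_id θ)
  exact (hf.hasFDerivAt.comp_hasDerivAt θ h1).deriv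

lemma fderiv_clm_eval {f : ℝ × ℝ → F'} {p : ℝ × ℝ}
    (hf : DifferentiableAt ℝ (fderiv ℝ f) p) (v w : ℝ × ℝ) :
    fderiv ℝ (fun q => fderiv ℝ f q v) p w = fderiv ℝ (fderiv ℝ f) p w v := by
  have h : HasFDerivAt (fun q => fderiv ℝ f q v)
      ((ContinuousLinearMap.apply ℝ F' v).comp (fderiv ℝ (fderiv ℝ f) p)) p :=
    (ContinuousLinearMap.apply ℝ F' v).hasFDerivAt.comp p hf.hasFDerivAt
  have h2 : fderiv ℝ (fun q => fderiv ℝ f q v) p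
      = (ContinuousLinearMap.apply ℝ F' v).comp (fderiv ℝ (fderiv ℝ f) p) := h.fderiv
  rw [h2]; rfl

lemma swap_partials {f : ℝ × ℝ → F'} {p : ℝ × ℝ} (hf : ContDiffAt ℝ ∞ f p) :
    fderiv ℝ (fun q => fderiv ℝ f q (0, 1)) p (1, 0)
      = fderiv ℝ (fun q => fderiv ℝ f q (1, 0)) p (0, 1) := by
  have hd : DifferentiableAt ℝ (fderiv ℝ f) p :=
    (hf.fderiv_right (m := 1) (by decide)).differentiableAt one_ne_zero
  rw [fderiv_clm_eval hd, fderiv_clm_eval hd]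
  exact hf.isSymmSndFDerivAt (by rw [minSmoothness_of_isRCLikeNormedField]; decide) _ _

lemma fderiv_mul_apply {f g : ℝ × ℝ → ℝ} {p : ℝ × ℝ} (hf : DifferentiableAt ℝ f p)
    (hg : DifferentiableAt ℝ g p) (w : ℝ × ℝ) :
    fderiv ℝ (fun q => f q * g q) p w = f p * fderiv ℝ g p w + g p * fderiv ℝ f p w := by
  rw [fderiv_fun_mul hf hg]; simp

lemma fderiv_inv_comp_apply {f : ℝ × ℝ → ℝ} {p : ℝ × ℝ} (hf : DifferentiableAt ℝ f p)
    (h0 : f p ≠ 0) (w : ℝ × ℝ) :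
    fderiv ℝ (fun q => (f q)⁻¹) p w = -((f p) ^ 2)⁻¹ * fderiv ℝ f p w := by
  have h := (hasDerivAt_inv h0).comp_hasFDerivAt p hf.hasFDerivAt
  have h2 : fderiv ℝ (fun q => (f q)⁻¹) p = (-((f p) ^ 2)⁻¹) • fderiv ℝ f p := h.fderiv
  rw [h2]; simp

variable {E' : Type*} [NormedAddCommGroup E'] [InnerProductSpace ℝ E']

lemma fderiv_norm_apply {f : ℝ × ℝ → E'} {p : ℝ × ℝ}
    (hf : DifferentiableAt ℝ f p) (h0 : f p ≠ 0) (w : ℝ × ℝ) :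
    fderiv ℝ (fun q => ‖f q‖) p w = ‖f p‖⁻¹ * ⟪f p, fderiv ℝ f p w⟫ := by
  have hg : HasFDerivAt (fun q => (⟪f q, f q⟫ : ℝ))
      ((fderivInnerCLM ℝ (f p, f p)).comp ((fderiv ℝ f p).prod (fderiv ℝ f p))) p :=
    hf.hasFDerivAt.inner ℝ hf.hasFDerivAt
  have hne : (⟪f p, f p⟫ : ℝ) ≠ 0 := inner_self_ne_zero.mpr h0
  have hs := (Real.hasDerivAt_sqrt hne).comp_hasFDerivAt p hg
  have funeq : (fun q => ‖f q‖) = fun q => Real.sqrt (⟪f q, f q⟫ : ℝ) := by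
    funext q; rw [real_inner_self_eq_norm_mul_norm, Real.sqrt_mul_self (norm_nonneg _)]
  have h2 : fderiv ℝ (fun q => ‖f q‖) p
      = (1 / (2 * Real.sqrt (⟪f p, f p⟫ : ℝ))) •
        ((fderivInnerCLM ℝ (f p, f p)).comp ((fderiv ℝ f p).prod (fderiv ℝ f p))) := by
    rw [funeq]; exact hs.fderiv
  rw [h2]
  have hn0 : ‖f p‖ ≠ 0 := norm_ne_zero_iff.mpr h0
  simp only [ContinuousLinearMap.coe_smul', Pi.smul_apply, ContinuousLinearMap.coe_comp',
    Function.comp_apply, ContinuousLinearMap.prod_apply, fderivInnerCLM_apply, smul_eq_mul]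
  rw [real_inner_self_eq_norm_mul_norm, Real.sqrt_mul_self (norm_nonneg _),
    real_inner_comm (fderiv ℝ f p w) (f p)]
  field_simp
  ring

lemma pascal_sum_step (k : ℕ) (u g : ℕ → ℝ) :
    (∑ i ∈ Finset.range (k + 2),
        ((Nat.choose (k+1) i : ℝ) - (Nat.choose (k+1) (i+1) : ℝ)) * u i * g (k + 1 - i)) =
    -(u 0 * g (k+1)) + ∑ i ∈ Finset.range (k + 1),
        ((Nat.choose k i : ℝ) - (Nat.choose k (i+1) : ℝ)) *
          (u (i+1) * g (k - i) + u i * g (k + 1 - i)) := by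
  set A : ℕ → ℝ := fun i => (Nat.choose k i : ℝ) - (Nat.choose k (i+1) : ℝ) with hA
  have hchoose : ∀ i, ((k+1).choose (i+1) : ℝ) = k.choose i + k.choose (i+1) := fun i => by
    exact_mod_cast Nat.choose_succ_succ k i
  have key : ∀ i ∈ Finset.range (k+1),
      ((Nat.choose (k+1) (i+1) : ℝ) - (Nat.choose (k+1) (i+1+1) : ℝ)) * u (i+1) * g (k+1-(i+1))
        = A i * (u (i+1) * g (k-i)) + A (i+1) * (u (i+1) * g (k-i)) := by
    intro i _
    rw [hchoose, hchoose, Nat.succ_sub_succ, hA]; ring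
  have rhskey : ∀ i ∈ Finset.range (k+1),
      A i * (u (i+1) * g (k-i) + u i * g (k+1-i))
        = A i * (u (i+1) * g (k-i)) + A i * (u i * g (k+1-i)) := fun i _ => by ring
  rw [Finset.sum_range_succ', Finset.sum_congr rfl key, Finset.sum_add_distrib,
      Finset.sum_range_succ (f := fun i => A (i+1) * (u (i+1) * g (k-i))),
      Finset.sum_congr rfl rhskey, Finset.sum_add_distrib,
      Finset.sum_range_succ' (f := fun i => A i * (u i * g (k+1-i)))]
  simp only [Nat.succ_sub_succ, Nat.sub_zero, Nat.sub_self]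
  have hA0 : A 0 = 1 - (k : ℝ) := by simp [hA]
  have hAk1 : A (k+1) = 0 := by
    simp [hA, Nat.choose_eq_zero_of_lt (by omega : k < k + 1),
      Nat.choose_eq_zero_of_lt (by omega : k < k + 2)]
  rw [hAk1, hA0]
  rw [Nat.choose_one_right, Nat.choose_zero_right]
  push_cast
  ring

noncomputable def Tv (m : ℕ) (c : ℝ → ℝ → EuclideanSpace ℝ (Fin m)) (p : ℝ × ℝ) :
    EuclideanSpace ℝ (Fin m) := fderiv ℝ (Function.uncurry c) p (0, 1)

noncomputable def Hvec (m : ℕ) (c : ℝ → ℝ → EuclideanSpace ℝ (Fin m)) (p : ℝ × ℝ) :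
    EuclideanSpace ℝ (Fin m) := fderiv ℝ (Function.uncurry c) p (1, 0)

noncomputable def Sf (m : ℕ) (c : ℝ → ℝ → EuclideanSpace ℝ (Fin m)) (p : ℝ × ℝ) : ℝ :=
  ‖Tv m c p‖

noncomputable def rho (m : ℕ) (c : ℝ → ℝ → EuclideanSpace ℝ (Fin m)) (p : ℝ × ℝ) : ℝ :=
  (Sf m c p)⁻¹

noncomputable def Gf (m : ℕ) (c : ℝ → ℝ → EuclideanSpace ℝ (Fin m)) : ℕ → ℝ × ℝ → ℝ
  | 0 => Sf m c
  | n + 1 => fun p => rho m c p * fderiv ℝ (Gf m c n) p (0, 1)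

noncomputable def Wf (m : ℕ) (c : ℝ → ℝ → EuclideanSpace ℝ (Fin m)) (p : ℝ × ℝ) : ℝ :=
  ⟪rho m c p • Tv m c p, rho m c p • fderiv ℝ (Hvec m c) p (0, 1)⟫

noncomputable def Vf (m : ℕ) (c : ℝ → ℝ → EuclideanSpace ℝ (Fin m)) : ℕ → ℝ × ℝ → ℝ
  | 0 => Wf m c
  | n + 1 => fun p => rho m c p * fderiv ℝ (Vf m c n) p (0, 1)

section

variable {m : ℕ} {c : ℝ → ℝ → EuclideanSpace ℝ (Fin m)} {Uo : Set (ℝ × ℝ)}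

lemma hle1 : (∞ : WithTop ℕ∞) ≠ 0 := by simp
lemma hle2 : (∞ + 1 : WithTop ℕ∞) ≤ ∞ := by exact_mod_cast le_top

lemma Tv_smooth (hc : ContDiff ℝ (⊤ : ℕ∞) (Function.uncurry c)) : ContDiff ℝ ∞ (Tv m c) :=
  ((hc.of_le (by exact_mod_cast le_top)).fderiv_right hle2).clm_apply contDiff_const

lemma Hvec_smooth (hc : ContDiff ℝ (⊤ : ℕ∞) (Function.uncurry c)) : ContDiff ℝ ∞ (Hvec m c) :=
  ((hc.of_le (by exact_mod_cast le_top)).fderiv_right hle2).clm_apply contDiff_const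

lemma deriv_c_eq (hc : ContDiff ℝ (⊤ : ℕ∞) (Function.uncurry c)) (ε θ : ℝ) :
    deriv (c ε) θ = Tv m c (ε, θ) :=
  deriv_snd (((hc.of_le (by simp)).differentiable hle1).differentiableAt)

lemma dEps_eq (hc : ContDiff ℝ (⊤ : ℕ∞) (Function.uncurry c)) (ε θ : ℝ) :
    dEps m c ε θ = Hvec m c (ε, θ) :=
  deriv_fst (((hc.of_le (by simp)).differentiable hle1).differentiableAt)

lemma Sf_smooth (hc : ContDiff ℝ (⊤ : ℕ∞) (Function.uncurry c))
    (hTne : ∀ p ∈ Uo, Tv m c p ≠ 0) : ContDiffOn ℝ ∞ (Sf m c) Uo := fun p hp =>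
  (((Tv_smooth hc).contDiffAt).norm ℝ (hTne p hp)).contDiffWithinAt

lemma Sf_ne (hTne : ∀ p ∈ Uo, Tv m c p ≠ 0) : ∀ p ∈ Uo, Sf m c p ≠ 0 := fun p hp =>
  norm_ne_zero_iff.mpr (hTne p hp)

lemma rho_smooth (hc : ContDiff ℝ (⊤ : ℕ∞) (Function.uncurry c))
    (hTne : ∀ p ∈ Uo, Tv m c p ≠ 0) : ContDiffOn ℝ ∞ (rho m c) Uo :=
  (Sf_smooth hc hTne).inv (Sf_ne hTne)

lemma Gf_smooth (hc : ContDiff ℝ (⊤ : ℕ∞) (Function.uncurry c)) (hUo : IsOpen Uo)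
    (hTne : ∀ p ∈ Uo, Tv m c p ≠ 0) : ∀ n, ContDiffOn ℝ ∞ (Gf m c n) Uo := by
  intro n
  induction n with
  | zero => exact Sf_smooth hc hTne
  | succ n ih =>
    exact (rho_smooth hc hTne).mul
      ((ih.fderiv_of_isOpen hUo hle2).clm_apply contDiffOn_const)

lemma Wf_smooth (hc : ContDiff ℝ (⊤ : ℕ∞) (Function.uncurry c))
    (hTne : ∀ p ∈ Uo, Tv m c p ≠ 0) : ContDiffOn ℝ ∞ (Wf m c) Uo := by
  apply ContDiffOn.inner ℝ
  · exact (rho_smooth hc hTne).smul (Tv_smooth hc).contDiffOn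
  · exact (rho_smooth hc hTne).smul
      (((Hvec_smooth hc).fderiv_right hle2).clm_apply contDiff_const).contDiffOn

lemma Vf_smooth (hc : ContDiff ℝ (⊤ : ℕ∞) (Function.uncurry c)) (hUo : IsOpen Uo)
    (hTne : ∀ p ∈ Uo, Tv m c p ≠ 0) : ∀ n, ContDiffOn ℝ ∞ (Vf m c n) Uo := by
  intro n
  induction n with
  | zero => exact Wf_smooth hc hTne
  | succ n ih =>
    exact (rho_smooth hc hTne).mul
      ((ih.fderiv_of_isOpen hUo hle2).clm_apply contDiffOn_const)

lemma diffAt_of_contDiffOn {f : ℝ × ℝ → ℝ} (hUo : IsOpen Uo) (hf : ContDiffOn ℝ ∞ f Uo)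
    {p : ℝ × ℝ} (hp : p ∈ Uo) : DifferentiableAt ℝ f p :=
  (hf.contDiffAt (hUo.mem_nhds hp)).differentiableAt hle1

lemma Tv_var (hc : ContDiff ℝ (⊤ : ℕ∞) (Function.uncurry c)) (p : ℝ × ℝ) :
    fderiv ℝ (Tv m c) p (1, 0) = fderiv ℝ (Hvec m c) p (0, 1) :=
  swap_partials ((hc.of_le (by simp)).contDiffAt)

lemma Sf_var (hc : ContDiff ℝ (⊤ : ℕ∞) (Function.uncurry c))
    (hTne : ∀ p ∈ Uo, Tv m c p ≠ 0) {p : ℝ × ℝ} (hp : p ∈ Uo) :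
    fderiv ℝ (Sf m c) p (1, 0) = Wf m c p * Sf m c p := by
  have hTd : DifferentiableAt ℝ (Tv m c) p :=
    ((Tv_smooth hc).differentiable hle1).differentiableAt
  have h1 : fderiv ℝ (Sf m c) p (1, 0)
      = ‖Tv m c p‖⁻¹ * ⟪Tv m c p, fderiv ℝ (Tv m c) p (1, 0)⟫ :=
    fderiv_norm_apply hTd (hTne p hp) (1, 0)
  rw [h1, Tv_var hc]
  have h0 : ‖Tv m c p‖ ≠ 0 := norm_ne_zero_iff.mpr (hTne p hp)
  unfold Wf rho Sf
  rw [real_inner_smul_left, real_inner_smul_right]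
  field_simp

lemma rho_var (hc : ContDiff ℝ (⊤ : ℕ∞) (Function.uncurry c))
    (hTne : ∀ p ∈ Uo, Tv m c p ≠ 0) {p : ℝ × ℝ} (hp : p ∈ Uo) :
    fderiv ℝ (rho m c) p (1, 0) = -(rho m c p * Wf m c p) := by
  have hSd : DifferentiableAt ℝ (Sf m c) p :=
    ((Tv_smooth hc).contDiffAt.norm ℝ (hTne p hp)).differentiableAt hle1
  have h1 : fderiv ℝ (rho m c) p (1, 0)
      = -((Sf m c p) ^ 2)⁻¹ * fderiv ℝ (Sf m c) p (1, 0) :=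
    fderiv_inv_comp_apply hSd (Sf_ne hTne p hp) (1, 0)
  rw [h1, Sf_var hc hTne hp]
  have h0 : Sf m c p ≠ 0 := Sf_ne hTne p hp
  unfold rho
  field_simp

lemma Gf_var (hc : ContDiff ℝ (⊤ : ℕ∞) (Function.uncurry c)) (hUo : IsOpen Uo)
    (hTne : ∀ p ∈ Uo, Tv m c p ≠ 0) :
    ∀ n, ∀ p ∈ Uo, fderiv ℝ (Gf m c n) p (1, 0) =
      ∑ i ∈ Finset.range (n + 1),
        ((Nat.choose n i : ℝ) - (Nat.choose n (i + 1) : ℝ)) * Vf m c i p * Gf m c (n - i) p := by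
  intro n
  induction n with
  | zero =>
    intro p hp
    have := Sf_var hc hTne hp
    simpa [Gf, Vf] using this
  | succ n ih =>
    intro p hp
    have hmem : Uo ∈ nhds p := hUo.mem_nhds hp
    have hGn : ContDiffOn ℝ ∞ (Gf m c n) Uo := Gf_smooth hc hUo hTne n
    have hrho : ContDiffOn ℝ ∞ (rho m c) Uo := rho_smooth hc hTne
    have hD : ContDiffOn ℝ ∞ (fun q => fderiv ℝ (Gf m c n) q (0, 1)) Uo :=
      (hGn.fderiv_of_isOpen hUo hle2).clm_apply contDiffOn_const
    have hVs := Vf_smooth hc hUo hTne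
    have hGs := Gf_smooth hc hUo hTne
    have dAt : ∀ {f : ℝ × ℝ → ℝ}, ContDiffOn ℝ ∞ f Uo → DifferentiableAt ℝ f p :=
      fun hf => diffAt_of_contDiffOn hUo hf hp
    -- step 1 : product rule
    have h1 : fderiv ℝ (Gf m c (n + 1)) p (1, 0)
        = rho m c p * fderiv ℝ (fun q => fderiv ℝ (Gf m c n) q (0, 1)) p (1, 0)
          + fderiv ℝ (Gf m c n) p (0, 1) * fderiv ℝ (rho m c) p (1, 0) :=
      fderiv_mul_apply (dAt hrho) (dAt hD) (1, 0)
    -- step 2 : swap partials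
    have h2 : fderiv ℝ (fun q => fderiv ℝ (Gf m c n) q (0, 1)) p (1, 0)
        = fderiv ℝ (fun q => fderiv ℝ (Gf m c n) q (1, 0)) p (0, 1) :=
      swap_partials (hGn.contDiffAt hmem)
    -- step 3 : rewrite with the induction hypothesis
    have h3 : fderiv ℝ (fun q => fderiv ℝ (Gf m c n) q (1, 0)) p (0, 1)
        = fderiv ℝ (fun q => ∑ i ∈ Finset.range (n + 1),
            ((Nat.choose n i : ℝ) - (Nat.choose n (i + 1) : ℝ)) * Vf m c i q * Gf m c (n - i) q)
            p (0, 1) := by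
      have : fderiv ℝ (fun q => fderiv ℝ (Gf m c n) q (1, 0)) p
          = fderiv ℝ (fun q => ∑ i ∈ Finset.range (n + 1),
              ((Nat.choose n i : ℝ) - (Nat.choose n (i + 1) : ℝ)) * Vf m c i q * Gf m c (n - i) q)
              p := by
        apply Filter.EventuallyEq.fderiv_eq
        filter_upwards [hmem] with q hq using ih q hq
      rw [this]
    -- step 4 : expand the derivative of the sum
    have hterm : ∀ i ∈ Finset.range (n + 1), DifferentiableAt ℝ
        (fun q => ((Nat.choose n i : ℝ) - (Nat.choose n (i + 1) : ℝ)) * Vf m c i q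
          * Gf m c (n - i) q) p := by
      intro i _
      exact ((dAt (hVs i)).const_mul _).mul (dAt (hGs (n - i)))
    have h4 : fderiv ℝ (fun q => ∑ i ∈ Finset.range (n + 1),
          ((Nat.choose n i : ℝ) - (Nat.choose n (i + 1) : ℝ)) * Vf m c i q * Gf m c (n - i) q)
          p (0, 1)
        = ∑ i ∈ Finset.range (n + 1), fderiv ℝ
            (fun q => ((Nat.choose n i : ℝ) - (Nat.choose n (i + 1) : ℝ)) * Vf m c i q
              * Gf m c (n - i) q) p (0, 1) := by
      rw [fderiv_fun_sum hterm, ContinuousLinearMap.sum_apply]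
    have h5 : ∀ i ∈ Finset.range (n + 1), fderiv ℝ
          (fun q => ((Nat.choose n i : ℝ) - (Nat.choose n (i + 1) : ℝ)) * Vf m c i q
            * Gf m c (n - i) q) p (0, 1)
        = ((Nat.choose n i : ℝ) - (Nat.choose n (i + 1) : ℝ)) *
            (fderiv ℝ (Vf m c i) p (0, 1) * Gf m c (n - i) p
              + Vf m c i p * fderiv ℝ (Gf m c (n - i)) p (0, 1)) := by
      intro i _
      have e1 : (fun q => ((Nat.choose n i : ℝ) - (Nat.choose n (i + 1) : ℝ)) * Vf m c i q
            * Gf m c (n - i) q)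
          = fun q => ((Nat.choose n i : ℝ) - (Nat.choose n (i + 1) : ℝ)) *
              (Vf m c i q * Gf m c (n - i) q) := by
        funext q; ring
      rw [e1]
      have h6 : fderiv ℝ (fun q => ((Nat.choose n i : ℝ) - (Nat.choose n (i + 1) : ℝ)) *
            (Vf m c i q * Gf m c (n - i) q)) p
          = ((Nat.choose n i : ℝ) - (Nat.choose n (i + 1) : ℝ)) •
              fderiv ℝ (fun q => Vf m c i q * Gf m c (n - i) q) p :=
        fderiv_const_mul ((dAt (hVs i)).mul (dAt (hGs (n - i)))) _
      rw [h6]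
      simp only [ContinuousLinearMap.coe_smul', Pi.smul_apply, smul_eq_mul]
      rw [fderiv_mul_apply (dAt (hVs i)) (dAt (hGs (n - i)))]
      ring
    have hmain : fderiv ℝ (Gf m c (n + 1)) p (1, 0)
        = -(Vf m c 0 p * Gf m c (n + 1) p) + ∑ i ∈ Finset.range (n + 1),
            ((Nat.choose n i : ℝ) - (Nat.choose n (i + 1) : ℝ)) *
              (Vf m c (i + 1) p * Gf m c (n - i) p + Vf m c i p * Gf m c (n + 1 - i) p) := by
      rw [h1, h2, h3, h4, Finset.sum_congr rfl h5, rho_var hc hTne hp, Finset.mul_sum]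
      have h8 : ∀ i ∈ Finset.range (n + 1),
          rho m c p * (((Nat.choose n i : ℝ) - (Nat.choose n (i + 1) : ℝ)) *
              (fderiv ℝ (Vf m c i) p (0, 1) * Gf m c (n - i) p
                + Vf m c i p * fderiv ℝ (Gf m c (n - i)) p (0, 1)))
            = ((Nat.choose n i : ℝ) - (Nat.choose n (i + 1) : ℝ)) *
                (Vf m c (i + 1) p * Gf m c (n - i) p + Vf m c i p * Gf m c (n + 1 - i) p) := by
        intro i hi
        have hin : i ≤ n := Nat.lt_succ_iff.mp (Finset.mem_range.mp hi)
        have e2 : n + 1 - i = (n - i) + 1 := by omega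
        rw [e2]
        have eV : Vf m c (i + 1) p = rho m c p * fderiv ℝ (Vf m c i) p (0, 1) := rfl
        have eG : Gf m c ((n - i) + 1) p = rho m c p * fderiv ℝ (Gf m c (n - i)) p (0, 1) := rfl
        rw [eV, eG]
        ring
      rw [Finset.sum_congr rfl h8]
      have eG1 : Gf m c (n + 1) p = rho m c p * fderiv ℝ (Gf m c n) p (0, 1) := rfl
      have eV0 : Vf m c 0 p = Wf m c p := rfl
      rw [eG1, eV0]
      ring
    rw [hmain]
    exact (pascal_sum_step n (fun i => Vf m c i p) (fun j => Gf m c j p)).symm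

end
/-- **Variation formula for the iterated arc-length derivatives of the speed (flat target).**
For a smooth family of immersed curves `c(ε, θ)` with `h = ∂_ε c`, `v = ∂_θ c/‖∂_θ c‖` and
`D_s = ‖∂_θ c‖⁻¹ ∂_θ`, with the convention `choose k (k+1) = 0`:
`∂_ε (D_s^k ‖∂_θ c‖) = Σ_{i=0}^{k} (choose k i − choose k (i+1)) ·
   D_s^i ⟨v, D_s h⟩ · D_s^{k−i} ‖∂_θ c‖`. -/
theorem speed_iterated_derivative_variation (m k : ℕ) (hm : 1 ≤ m) (δ : ℝ) (hδ : 0 < δ)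
    (c : ℝ → ℝ → EuclideanSpace ℝ (Fin m))
    (hc : ContDiff ℝ (⊤ : ℕ∞) (Function.uncurry c))
    (hreg : ∀ ε ∈ Ioo (-δ) δ, ∀ θ : ℝ, deriv (c ε) θ ≠ 0) :
    ∀ ε ∈ Ioo (-δ) δ, ∀ θ ∈ Icc (0:ℝ) (2 * π),
      deriv (fun ε' => (DsScalar m c ε')^[k] (fun θ' => ‖deriv (c ε') θ'‖) θ) ε =
        ∑ i ∈ Finset.range (k + 1),
          ((k.choose i : ℝ) - (k.choose (i + 1) : ℝ)) *
            (DsScalar m c ε)^[i]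
              (fun θ' => ⟪unitTangent m c ε θ', Ds m c (dEps m c) ε θ'⟫) θ *
            (DsScalar m c ε)^[k - i] (fun θ' => ‖deriv (c ε) θ'‖) θ := by

  intro ε hε θ _
  have hUo : IsOpen (Ioo (-δ) δ ×ˢ (univ : Set ℝ)) := isOpen_Ioo.prod isOpen_univ
  have hTne : ∀ p ∈ Ioo (-δ) δ ×ˢ (univ : Set ℝ), Tv m c p ≠ 0 := by
    intro p hp
    have h := hreg p.1 hp.1 p.2
    rwa [deriv_c_eq hc] at h
  have dAt : ∀ {f : ℝ × ℝ → ℝ}, ContDiffOn ℝ ∞ f (Ioo (-δ) δ ×ˢ (univ : Set ℝ)) →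
      ∀ {p : ℝ × ℝ}, p ∈ Ioo (-δ) δ ×ˢ (univ : Set ℝ) → DifferentiableAt ℝ f p :=
    by intro f hf p hp; exact diffAt_of_contDiffOn hUo hf hp
  -- identification of the scalar iterates with `Gf`
  have hGiter : ∀ n, ∀ ε' ∈ Ioo (-δ) δ, ∀ θ' : ℝ,
      (DsScalar m c ε')^[n] (fun θ'' => ‖deriv (c ε') θ''‖) θ' = Gf m c n (ε', θ') := by
    intro n
    induction n with
    | zero =>
      intro ε' hε' θ'
      simp only [Function.iterate_zero, id_eq]
      rw [deriv_c_eq hc]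
      rfl
    | succ n ih =>
      intro ε' hε' θ'
      rw [Function.iterate_succ_apply']
      have hpU : (ε', θ') ∈ Ioo (-δ) δ ×ˢ (univ : Set ℝ) := ⟨hε', mem_univ _⟩
      have hfun : (DsScalar m c ε')^[n] (fun θ'' => ‖deriv (c ε') θ''‖)
          = fun t => Gf m c n (ε', t) := funext fun t => ih ε' hε' t
      show ‖deriv (c ε') θ'‖⁻¹ * deriv ((DsScalar m c ε')^[n] (fun θ'' => ‖deriv (c ε') θ''‖)) θ'
          = Gf m c (n + 1) (ε', θ')
      rw [hfun, deriv_snd (dAt (Gf_smooth hc hUo hTne n) hpU), deriv_c_eq hc]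
      rfl
  -- identification of the iterates of the inner-product term with `Vf`
  have hWeq : ∀ ε' ∈ Ioo (-δ) δ, ∀ θ' : ℝ,
      (⟪unitTangent m c ε' θ', Ds m c (dEps m c) ε' θ'⟫ : ℝ) = Wf m c (ε', θ') := by
    intro ε' hε' θ'
    have hHd : DifferentiableAt ℝ (Hvec m c) (ε', θ') :=
      ((Hvec_smooth hc).differentiable hle1).differentiableAt
    have h1 : unitTangent m c ε' θ' = rho m c (ε', θ') • Tv m c (ε', θ') := by
      unfold unitTangent
      rw [deriv_c_eq hc]
      rfl
    have h2 : Ds m c (dEps m c) ε' θ'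
        = rho m c (ε', θ') • fderiv ℝ (Hvec m c) (ε', θ') (0, 1) := by
      unfold Ds
      have hd : dEps m c ε' = fun t => Hvec m c (ε', t) := funext fun t => dEps_eq hc ε' t
      rw [hd, deriv_snd hHd, deriv_c_eq hc]
      rfl
    rw [h1, h2]
    rfl
  have hViter : ∀ n, ∀ ε' ∈ Ioo (-δ) δ, ∀ θ' : ℝ,
      (DsScalar m c ε')^[n]
          (fun θ'' => ⟪unitTangent m c ε' θ'', Ds m c (dEps m c) ε' θ''⟫) θ'
        = Vf m c n (ε', θ') := by
    intro n
    induction n with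
    | zero =>
      intro ε' hε' θ'
      simp only [Function.iterate_zero, id_eq]
      exact hWeq ε' hε' θ'
    | succ n ih =>
      intro ε' hε' θ'
      rw [Function.iterate_succ_apply']
      have hpU : (ε', θ') ∈ Ioo (-δ) δ ×ˢ (univ : Set ℝ) := ⟨hε', mem_univ _⟩
      have hfun : (DsScalar m c ε')^[n]
            (fun θ'' => ⟪unitTangent m c ε' θ'', Ds m c (dEps m c) ε' θ''⟫)
          = fun t => Vf m c n (ε', t) := funext fun t => ih ε' hε' t
      show ‖deriv (c ε') θ'‖⁻¹ * deriv ((DsScalar m c ε')^[n]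
            (fun θ'' => ⟪unitTangent m c ε' θ'', Ds m c (dEps m c) ε' θ''⟫)) θ'
          = Vf m c (n + 1) (ε', θ')
      rw [hfun, deriv_snd (dAt (Vf_smooth hc hUo hTne n) hpU), deriv_c_eq hc]
      rfl
  -- the main computation
  have hpU : (ε, θ) ∈ Ioo (-δ) δ ×ˢ (univ : Set ℝ) := ⟨hε, mem_univ _⟩
  have hev : (fun ε' => (DsScalar m c ε')^[k] (fun θ' => ‖deriv (c ε') θ'‖) θ)
      =ᶠ[nhds ε] fun ε' => Gf m c k (ε', θ) := by
    filter_upwards [Ioo_mem_nhds hε.1 hε.2] with ε' hε' using hGiter k ε' hε' θ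
  rw [hev.deriv_eq, deriv_fst (dAt (Gf_smooth hc hUo hTne k) hpU),
    Gf_var hc hUo hTne k (ε, θ) hpU]
  refine Finset.sum_congr rfl fun i _ => ?_
  rw [hViter i ε hε θ, hGiter (k - i) ε hε θ]
end

section
/- Let m ≥ 1 be an integer, δ > 0, and let c : (−δ, δ) × [0, 2π] → ℝ^m be a smooth map with ∂_θ c(ε, θ) ≠ 0 for all (ε, θ); write h := ∂_ε c and D_s := ‖∂_θ c‖^{-1} ∂_θ, and let ℓ(ε) := ∫₀^{2π} ‖∂_θ c(ε, θ)‖ dθ. Then for every ε, |ℓ'(ε)| ≤ ℓ(ε)^{1/2} ( ∫₀^{2π} ‖D_s h(ε, θ)‖² ‖∂_θ c(ε, θ)‖ dθ )^{1/2}. -/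
open Real Set MeasureTheory
open scoped RealInnerProductSpace

lemma hasDerivAt_norm_inner {F : Type*} [NormedAddCommGroup F] [InnerProductSpace ℝ F]
    {v : ℝ → F} {v' : F} {t : ℝ} (hv : HasDerivAt v v' t) (h0 : v t ≠ 0) :
    HasDerivAt (fun s => ‖v s‖) (⟪v t, v'⟫ / ‖v t‖) t := by
  have h1 : HasDerivAt (fun s => ‖v s‖ ^ 2) (2 * ⟪v t, v'⟫) t := hv.norm_sq
  have hpos : (0:ℝ) < ‖v t‖ := norm_pos_iff.2 h0
  have h2 : HasDerivAt (fun s => Real.sqrt (‖v s‖ ^ 2))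
      (1 / (2 * Real.sqrt (‖v t‖ ^ 2)) * (2 * ⟪v t, v'⟫)) t :=
    (Real.hasDerivAt_sqrt (by positivity)).comp t h1
  have heq : (fun s => Real.sqrt (‖v s‖ ^ 2)) = fun s => ‖v s‖ := by
    funext s; rw [Real.sqrt_sq (norm_nonneg _)]
  rw [heq] at h2
  convert h2 using 1
  rw [Real.sqrt_sq (norm_nonneg _)]
  field_simp

/-- **Key estimate for the variation of the length (flat target).**
For a smooth family of immersed curves `c : (−δ,δ) × [0,2π] → ℝ^m` with `h = ∂_ε c` and
`ℓ(ε) = ∫₀^{2π} ‖∂_θ c(ε,θ)‖ dθ`, one has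
`|ℓ'(ε)| ≤ ℓ(ε)^{1/2} (∫₀^{2π} ‖D_s h‖² ‖∂_θ c‖ dθ)^{1/2}`. -/
theorem length_variation_estimate (m : ℕ) (hm : 1 ≤ m) (δ : ℝ) (hδ : 0 < δ)
    (c : ℝ → ℝ → EuclideanSpace ℝ (Fin m))
    (hc : ContDiff ℝ (⊤ : ℕ∞) (Function.uncurry c))
    (hreg : ∀ ε ∈ Ioo (-δ) δ, ∀ θ ∈ Icc (0:ℝ) (2 * π), deriv (c ε) θ ≠ 0) :
    ∀ ε ∈ Ioo (-δ) δ,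
      |deriv (fun ε' => ∫ θ in (0:ℝ)..(2 * π), ‖deriv (c ε') θ‖) ε| ≤
        Real.sqrt (∫ θ in (0:ℝ)..(2 * π), ‖deriv (c ε) θ‖) *
          Real.sqrt (∫ θ in (0:ℝ)..(2 * π),
            ‖Ds m c (dEps m c) ε θ‖ ^ 2 * ‖deriv (c ε) θ‖) := by
  set Fu := Function.uncurry c with hFu
  have hFd : Differentiable ℝ Fu := hc.differentiable (by simp)
  have hc' : ContDiff ℝ (⊤ : ℕ∞) (fderiv ℝ Fu) := hc.fderiv_right (by simp)
  have hc'' : Differentiable ℝ (fderiv ℝ Fu) := hc'.differentiable (by simp)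
  set g : ℝ × ℝ → EuclideanSpace ℝ (Fin m) := fun p => fderiv ℝ Fu p (0, 1) with hg
  set G2 : ℝ × ℝ → EuclideanSpace ℝ (Fin m) :=
    fun p => fderiv ℝ (fderiv ℝ Fu) p (1, 0) (0, 1) with hG2
  have haD : ∀ x θ, HasDerivAt (c x) (g (x, θ)) θ := by
    intro x θ
    have h1 : HasDerivAt (fun t : ℝ => ((x : ℝ), t)) ((0 : ℝ), (1 : ℝ)) θ :=
      (hasDerivAt_const θ x).prodMk (hasDerivAt_id θ)
    exact (hFd (x, θ)).hasFDerivAt.comp_hasDerivAt θ h1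
  have ha : ∀ x θ, deriv (c x) θ = g (x, θ) := fun x θ => (haD x θ).deriv
  have hbD : ∀ x θ, HasDerivAt (fun x' => c x' θ) (fderiv ℝ Fu (x, θ) (1, 0)) x := by
    intro x θ
    have h1 : HasDerivAt (fun x' : ℝ => (x', θ)) ((1 : ℝ), (0 : ℝ)) x :=
      (hasDerivAt_id x).prodMk (hasDerivAt_const x θ)
    exact (hFd (x, θ)).hasFDerivAt.comp_hasDerivAt x h1
  have hb : ∀ x θ, dEps m c x θ = fderiv ℝ Fu (x, θ) (1, 0) := fun x θ => (hbD x θ).deriv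
  have hgε : ∀ x θ, HasDerivAt (fun x' => g (x', θ)) (G2 (x, θ)) x := by
    intro x θ
    have h1 : HasDerivAt (fun x' : ℝ => (x', θ)) ((1 : ℝ), (0 : ℝ)) x :=
      (hasDerivAt_id x).prodMk (hasDerivAt_const x θ)
    have h2 : HasDerivAt (fun x' => fderiv ℝ Fu (x', θ))
        (fderiv ℝ (fderiv ℝ Fu) (x, θ) (1, 0)) x :=
      (hc'' (x, θ)).hasFDerivAt.comp_hasDerivAt x h1
    simpa using h2.clm_apply (hasDerivAt_const x ((0 : ℝ), (1 : ℝ)))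
  have hsymm : ∀ p : ℝ × ℝ, fderiv ℝ (fderiv ℝ Fu) p (0, 1) (1, 0) = G2 p := fun p =>
    second_derivative_symmetric (fun y => (hFd y).hasFDerivAt) (hc'' p).hasFDerivAt _ _
  have hDs : ∀ x θ, Ds m c (dEps m c) x θ = ‖g (x, θ)‖⁻¹ • G2 (x, θ) := by
    intro x θ
    unfold Ds
    rw [ha]
    congr 1
    have he : dEps m c x = fun θ' => fderiv ℝ Fu (x, θ') (1, 0) := funext (hb x)
    have h1 : HasDerivAt (fun θ' : ℝ => ((x : ℝ), θ')) ((0 : ℝ), (1 : ℝ)) θ :=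
      (hasDerivAt_const θ x).prodMk (hasDerivAt_id θ)
    have h2 : HasDerivAt (fun θ' => fderiv ℝ Fu (x, θ'))
        (fderiv ℝ (fderiv ℝ Fu) (x, θ) (0, 1)) θ :=
      (hc'' (x, θ)).hasFDerivAt.comp_hasDerivAt θ h1
    have h3 := h2.clm_apply (hasDerivAt_const θ ((1 : ℝ), (0 : ℝ)))
    have h4 : HasDerivAt (fun θ' => fderiv ℝ Fu (x, θ') (1, 0)) (G2 (x, θ)) θ := by
      simpa [hsymm] using h3
    rw [he]
    exact h4.deriv
  have hgcont : Continuous g := hc'.continuous.clm_apply continuous_const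
  have hc2 : ContDiff ℝ (⊤ : ℕ∞) (fderiv ℝ (fderiv ℝ Fu)) := hc'.fderiv_right (by simp)
  have hG2cont : Continuous G2 :=
    ((hc2.continuous.clm_apply continuous_const).clm_apply continuous_const)
  have hπ : (0:ℝ) ≤ 2 * π := by positivity
  intro ε hε
  obtain ⟨ρ, hρ0, hball⟩ := Metric.isOpen_iff.1 isOpen_Ioo ε hε
  set r := ρ / 2 with hrdef
  have hr0 : 0 < r := half_pos hρ0
  have hsub : Metric.closedBall ε r ⊆ Ioo (-δ) δ :=
    (Metric.closedBall_subset_ball (by simp [hrdef]; linarith)).trans hball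
  have hgne : ∀ x ∈ Metric.closedBall ε r, ∀ θ ∈ Icc (0:ℝ) (2 * π), g (x, θ) ≠ 0 := by
    intro x hx θ hθ
    rw [← ha]
    exact hreg x (hsub hx) θ hθ
  set K := Metric.closedBall ε r ×ˢ Icc (0:ℝ) (2 * π) with hK
  have hKc : IsCompact K := (isCompact_closedBall _ _).prod isCompact_Icc
  obtain ⟨M, hM⟩ := hKc.exists_bound_of_continuousOn hG2cont.continuousOn
  set F' : ℝ → ℝ → ℝ := fun x θ => ⟪g (x, θ), G2 (x, θ)⟫ / ‖g (x, θ)‖ with hF'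
  have hmemK : ∀ x ∈ Metric.closedBall ε r, ∀ θ ∈ Icc (0:ℝ) (2 * π), (x, θ) ∈ K :=
    fun x hx θ hθ => ⟨hx, hθ⟩
  have hF'le : ∀ x ∈ Metric.closedBall ε r, ∀ θ ∈ Icc (0:ℝ) (2 * π), |F' x θ| ≤ ‖G2 (x, θ)‖ := by
    intro x hx θ hθ
    have hg0 : g (x, θ) ≠ 0 := hgne x hx θ hθ
    have hgp : (0:ℝ) < ‖g (x, θ)‖ := norm_pos_iff.2 hg0
    rw [hF', abs_div, abs_of_nonneg (norm_nonneg _), div_le_iff₀ hgp]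
    calc |⟪g (x, θ), G2 (x, θ)⟫| ≤ ‖g (x, θ)‖ * ‖G2 (x, θ)‖ := abs_real_inner_le_norm _ _
      _ = ‖G2 (x, θ)‖ * ‖g (x, θ)‖ := mul_comm _ _
  -- differentiate under the integral sign
  have key := intervalIntegral.hasDerivAt_integral_of_dominated_loc_of_deriv_le
    (F := fun x θ => ‖g (x, θ)‖) (F' := F') (x₀ := ε) (a := (0:ℝ)) (b := 2 * π)
    (bound := fun _ => M) (μ := volume) (Metric.ball_mem_nhds ε hr0)
    (Filter.Eventually.of_forall fun x =>
      ((hgcont.comp (Continuous.prodMk_right x)).norm).aestronglyMeasurable)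
    ((hgcont.comp (Continuous.prodMk_right ε)).norm.intervalIntegrable _ _)
    (((((hgcont.comp (Continuous.prodMk_right ε)).inner
        (hG2cont.comp (Continuous.prodMk_right ε))).measurable).div
        ((hgcont.comp (Continuous.prodMk_right ε)).norm.measurable)).aestronglyMeasurable)
    (Filter.Eventually.of_forall (by
      intro θ hθ x hx
      have hθ' : θ ∈ Icc (0:ℝ) (2 * π) := by
        rw [uIoc_of_le hπ] at hθ
        exact Ioc_subset_Icc_self hθ
      have hx' : x ∈ Metric.closedBall ε r := Metric.ball_subset_closedBall hx
      calc ‖F' x θ‖ = |F' x θ| := rfl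
        _ ≤ ‖G2 (x, θ)‖ := hF'le x hx' θ hθ'
        _ ≤ M := hM _ (hmemK x hx' θ hθ')))
    (intervalIntegrable_const)
    (Filter.Eventually.of_forall (by
      intro θ hθ x hx
      have hθ' : θ ∈ Icc (0:ℝ) (2 * π) := by
        rw [uIoc_of_le hπ] at hθ
        exact Ioc_subset_Icc_self hθ
      exact hasDerivAt_norm_inner (hgε x θ) (hgne x (Metric.ball_subset_closedBall hx) θ hθ')))
  obtain ⟨hF'int, hder⟩ := key
  have hfun : (fun ε' => ∫ θ in (0:ℝ)..(2 * π), ‖deriv (c ε') θ‖)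
      = fun ε' => ∫ θ in (0:ℝ)..(2 * π), ‖g (ε', θ)‖ := by
    funext ε'
    apply intervalIntegral.integral_congr
    intro θ _
    simp only [ha]
  rw [hfun, hder.deriv]
  -- pointwise norms of Ds
  set ψ : ℝ → ℝ := fun θ => ‖g (ε, θ)‖⁻¹ * ‖G2 (ε, θ)‖ with hψ
  have hDsn : ∀ θ, ‖Ds m c (dEps m c) ε θ‖ = ψ θ := by
    intro θ
    rw [hDs, norm_smul, Real.norm_eq_abs, abs_of_nonneg (inv_nonneg.2 (norm_nonneg _))]
  have hψnn : ∀ θ, 0 ≤ ψ θ := fun θ =>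
    mul_nonneg (inv_nonneg.2 (norm_nonneg _)) (norm_nonneg _)
  have hεK : ε ∈ Metric.closedBall ε r := Metric.mem_closedBall_self hr0.le
  -- Step A : |∫ F'| ≤ ∫ ψ ‖g‖
  have hψg_int : IntervalIntegrable (fun θ => ψ θ * ‖g (ε, θ)‖) volume 0 (2 * π) := by
    rw [intervalIntegrable_iff_integrableOn_Ioc_of_le hπ]
    apply Integrable.mono'
        (((hG2cont.comp (Continuous.prodMk_right ε)).norm).integrableOn_Ioc)
    · exact ((((hgcont.comp (Continuous.prodMk_right ε)).norm.measurable.inv.mul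
        ((hG2cont.comp (Continuous.prodMk_right ε)).norm.measurable)).mul
        ((hgcont.comp (Continuous.prodMk_right ε)).norm.measurable)).aestronglyMeasurable)
    · refine Filter.Eventually.of_forall fun θ => ?_
      have h1 : ‖g (ε, θ)‖⁻¹ * ‖g (ε, θ)‖ ≤ 1 := by
        rcases eq_or_ne (g (ε, θ)) 0 with h | h
        · simp [h]
        · rw [inv_mul_cancel₀ (norm_ne_zero_iff.2 h)]
      have h2 : 0 ≤ ψ θ * ‖g (ε, θ)‖ := mul_nonneg (hψnn θ) (norm_nonneg _)
      rw [Real.norm_eq_abs, abs_of_nonneg h2, hψ]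
      calc ‖g (ε, θ)‖⁻¹ * ‖G2 (ε, θ)‖ * ‖g (ε, θ)‖
          = ‖g (ε, θ)‖⁻¹ * ‖g (ε, θ)‖ * ‖G2 (ε, θ)‖ := by ring
        _ ≤ 1 * ‖G2 (ε, θ)‖ := mul_le_mul_of_nonneg_right h1 (norm_nonneg _)
        _ = ‖G2 (ε, θ)‖ := one_mul _
  have hstepA : |∫ θ in (0:ℝ)..(2 * π), F' ε θ| ≤
      ∫ θ in (0:ℝ)..(2 * π), ψ θ * ‖g (ε, θ)‖ := by
    calc |∫ θ in (0:ℝ)..(2 * π), F' ε θ| ≤ ∫ θ in (0:ℝ)..(2 * π), |F' ε θ| := by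
          simpa [Real.norm_eq_abs] using intervalIntegral.norm_integral_le_integral_norm
            (f := F' ε) (a := (0:ℝ)) (b := 2 * π) (μ := volume) hπ
      _ ≤ ∫ θ in (0:ℝ)..(2 * π), ψ θ * ‖g (ε, θ)‖ := by
          apply intervalIntegral.integral_mono_on hπ hF'int.abs hψg_int
          intro θ hθ
          have hg0 : g (ε, θ) ≠ 0 := hgne ε hεK θ hθ
          have heq : ψ θ * ‖g (ε, θ)‖ = ‖G2 (ε, θ)‖ := by
            rw [hψ]
            field_simp
          rw [heq]
          exact hF'le ε hεK θ hθ
  refine hstepA.trans ?_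
  -- Step B : Cauchy-Schwarz
  set μ₀ : Measure ℝ := volume.restrict (Ioc (0:ℝ) (2 * π)) with hμ₀
  haveI : IsFiniteMeasure μ₀ := by
    constructor
    rw [hμ₀, Measure.restrict_apply_univ]
    exact measure_Ioc_lt_top
  obtain ⟨Mg, hMg⟩ := isCompact_Icc.exists_bound_of_continuousOn
    ((hgcont.comp (Continuous.prodMk_right ε)).continuousOn (s := Icc (0:ℝ) (2 * π)))
  have hIccne : (Icc (0:ℝ) (2 * π)).Nonempty := nonempty_Icc.2 hπ
  obtain ⟨θ₀, hθ₀, hmin⟩ := isCompact_Icc.exists_isMinOn hIccne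
    ((hgcont.comp (Continuous.prodMk_right ε)).norm.continuousOn (s := Icc (0:ℝ) (2 * π)))
  have hm0 : (0:ℝ) < ‖g (ε, θ₀)‖ := norm_pos_iff.2 (hgne ε hεK θ₀ hθ₀)
  set f1 : ℝ → ℝ := fun θ => Real.sqrt ‖g (ε, θ)‖ with hf1
  set f2 : ℝ → ℝ := fun θ => ψ θ * Real.sqrt ‖g (ε, θ)‖ with hf2
  have hf1meas : AEStronglyMeasurable f1 μ₀ :=
    ((hgcont.comp (Continuous.prodMk_right ε)).norm.sqrt).aestronglyMeasurable
  have hf2meas : AEStronglyMeasurable f2 μ₀ := by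
    apply Measurable.aestronglyMeasurable
    exact ((hgcont.comp (Continuous.prodMk_right ε)).norm.measurable.inv.mul
        ((hG2cont.comp (Continuous.prodMk_right ε)).norm.measurable)).mul
        ((hgcont.comp (Continuous.prodMk_right ε)).norm.sqrt.measurable)
  have hae : ∀ᵐ θ ∂μ₀, θ ∈ Icc (0:ℝ) (2 * π) := by
    rw [hμ₀, ae_restrict_iff' measurableSet_Ioc]
    exact Filter.Eventually.of_forall fun θ hθ => Ioc_subset_Icc_self hθ
  have hf1mem : MemLp f1 (ENNReal.ofReal 2) μ₀ := by
    apply MemLp.of_bound hf1meas (Real.sqrt Mg)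
    filter_upwards [hae] with θ hθ
    rw [Real.norm_eq_abs, abs_of_nonneg (Real.sqrt_nonneg _)]
    exact Real.sqrt_le_sqrt (hMg _ hθ)
  have hf2mem : MemLp f2 (ENNReal.ofReal 2) μ₀ := by
    apply MemLp.of_bound hf2meas (‖g (ε, θ₀)‖⁻¹ * M * Real.sqrt Mg)
    filter_upwards [hae] with θ hθ
    have h1 : ψ θ ≤ ‖g (ε, θ₀)‖⁻¹ * M := by
      apply mul_le_mul
      · exact inv_anti₀ hm0 (hmin hθ)
      · exact hM _ (hmemK ε hεK θ hθ)
      · exact norm_nonneg _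
      · exact inv_nonneg.2 (norm_nonneg _)
    have h2 : Real.sqrt ‖g (ε, θ)‖ ≤ Real.sqrt Mg := Real.sqrt_le_sqrt (hMg _ hθ)
    rw [Real.norm_eq_abs, abs_of_nonneg (mul_nonneg (hψnn θ) (Real.sqrt_nonneg _))]
    have hM0 : (0:ℝ) ≤ M := le_trans (norm_nonneg _) (hM _ (hmemK ε hεK θ hθ))
    exact mul_le_mul h1 h2 (Real.sqrt_nonneg _)
      (mul_nonneg (inv_nonneg.2 (norm_nonneg _)) hM0)
  have hpq : (2:ℝ).HolderConjugate 2 := Real.HolderConjugate.two_two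
  have holder := MeasureTheory.integral_mul_le_Lp_mul_Lq_of_nonneg hpq
    (Filter.Eventually.of_forall fun θ => Real.sqrt_nonneg _ : 0 ≤ᵐ[μ₀] f1)
    (Filter.Eventually.of_forall fun θ => mul_nonneg (hψnn θ) (Real.sqrt_nonneg _) : 0 ≤ᵐ[μ₀] f2)
    hf1mem hf2mem
  have e1 : ∀ θ, f1 θ * f2 θ = ψ θ * ‖g (ε, θ)‖ := by
    intro θ
    rw [hf1, hf2]
    have : Real.sqrt ‖g (ε, θ)‖ * Real.sqrt ‖g (ε, θ)‖ = ‖g (ε, θ)‖ :=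
      Real.mul_self_sqrt (norm_nonneg _)
    rw [← this]
    ring
  have e2 : ∀ θ, f1 θ ^ (2:ℝ) = ‖g (ε, θ)‖ := by
    intro θ
    rw [show ((2:ℝ)) = ((2:ℕ):ℝ) by norm_num, Real.rpow_natCast, hf1]
    exact Real.sq_sqrt (norm_nonneg _)
  have e3 : ∀ θ, f2 θ ^ (2:ℝ) = ψ θ ^ 2 * ‖g (ε, θ)‖ := by
    intro θ
    rw [show ((2:ℝ)) = ((2:ℕ):ℝ) by norm_num, Real.rpow_natCast, hf2, mul_pow,
      Real.sq_sqrt (norm_nonneg _)]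
  rw [intervalIntegral.integral_of_le hπ]
  have hgoal1 : (∫ θ in (0:ℝ)..(2 * π), ‖deriv (c ε) θ‖) = ∫ θ, ‖g (ε, θ)‖ ∂μ₀ := by
    rw [intervalIntegral.integral_of_le hπ]
    apply setIntegral_congr_fun measurableSet_Ioc
    intro θ _
    simp only [ha]
  have hgoal2 : (∫ θ in (0:ℝ)..(2 * π), ‖Ds m c (dEps m c) ε θ‖ ^ 2 * ‖deriv (c ε) θ‖)
      = ∫ θ, ψ θ ^ 2 * ‖g (ε, θ)‖ ∂μ₀ := by
    rw [intervalIntegral.integral_of_le hπ]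
    apply setIntegral_congr_fun measurableSet_Ioc
    intro θ _
    simp only [ha, hDsn]
  rw [hgoal1, hgoal2]
  calc ∫ θ, ψ θ * ‖g (ε, θ)‖ ∂μ₀ = ∫ θ, f1 θ * f2 θ ∂μ₀ := by
        apply integral_congr_ae
        exact Filter.Eventually.of_forall fun θ => (e1 θ).symm
    _ ≤ (∫ θ, f1 θ ^ (2:ℝ) ∂μ₀) ^ ((1:ℝ)/2) * (∫ θ, f2 θ ^ (2:ℝ) ∂μ₀) ^ ((1:ℝ)/2) := holder
    _ = Real.sqrt (∫ θ, ‖g (ε, θ)‖ ∂μ₀) * Real.sqrt (∫ θ, ψ θ ^ 2 * ‖g (ε, θ)‖ ∂μ₀) := by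
        rw [Real.sqrt_eq_rpow, Real.sqrt_eq_rpow]
        congr 2
        · exact integral_congr_ae (Filter.Eventually.of_forall e2)
        · exact integral_congr_ae (Filter.Eventually.of_forall e3)
end
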